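/- In the satisfiability reduction game for W/BB-hedonic Nash stability: given a satisfiable CNF formula F = X₁ ∧ ... ∧ X_k over variables p₁,...,p_m with satisfying valuation v, the partition π = { {1} ∪ {literals true under v}, {0} ∪ {literals false under v}, {X₁,...,X_k} } is Nash stable (and individually rational) in the constructed BB-hedonic game. -/

import Mathlib

open Finset

/-- A partition of the player set into coalitions: `part i` is the coalition
containing player `i`. -/
structure HPartition (N : Type*) where
  part : N → Finset N
  mem_self : ∀ i, i ∈ part i
  eq_of_mem : ∀ i j : N, j ∈ part i → part j = part i

section Defs

variable {N : Type*} [DecidableEq N]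

/-- Strict part of a weak preference over coalitions. -/
def SPref (pref : N → Finset N → Finset N → Prop) (i : N) (S T : Finset N) : Prop :=
  pref i S T ∧ ¬ pref i T S

/-- `S` is an (existing or empty) coalition of the partition `π`. -/
def IsCoalitionOf (π : HPartition N) (S : Finset N) : Prop :=
  S = ∅ ∨ ∃ j, S = π.part j

/-- Nash stability: no player strictly prefers joining another existing
(possibly empty) coalition. -/
def NashStable (pref : N → Finset N → Finset N → Prop) (π : HPartition N) : Prop :=
  ∀ i S, IsCoalitionOf π S → S ≠ π.part i →
    ¬ SPref pref i (insert i S) (π.part i)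

/-- Individual stability: no strictly improving move that all members of the
joined coalition weakly approve. -/
def IndStable (pref : N → Finset N → Finset N → Prop) (π : HPartition N) : Prop :=
  ∀ i S, IsCoalitionOf π S → S ≠ π.part i →
    ¬ (SPref pref i (insert i S) (π.part i) ∧ ∀ j ∈ S, pref j (insert i S) S)

/-- Contractual individual stability: no strictly improving move approved by the
joined coalition and by the abandoned coalition. -/
def ContIndStable (pref : N → Finset N → Finset N → Prop) (π : HPartition N) : Prop :=
  ∀ i S, IsCoalitionOf π S → S ≠ π.part i →
    ¬ (SPref pref i (insert i S) (π.part i) ∧ (∀ j ∈ S, pref j (insert i S) S) ∧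
        (∀ j ∈ π.part i, j ≠ i → pref j ((π.part i).erase i) (π.part i)))

/-- Individual rationality: everyone weakly prefers his coalition to being alone. -/
def IndRational (pref : N → Finset N → Finset N → Prop) (π : HPartition N) : Prop :=
  ∀ i, pref i (π.part i) {i}

/-- A CIS deviation from `π` to `π'`: player `i` moves to the (possibly empty)
existing coalition `T`, strictly improving, while no member of `T` nor of the
abandoned coalition is worse off. -/
def CISDeviation (pref : N → Finset N → Finset N → Prop) (π π' : HPartition N) : Prop :=
  ∃ i T, IsCoalitionOf π T ∧ T ≠ π.part i ∧ i ∉ T ∧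
    SPref pref i (insert i T) (π.part i) ∧
    (∀ j ∈ T, pref j (insert i T) T) ∧
    (∀ j ∈ π.part i, j ≠ i → pref j ((π.part i).erase i) (π.part i)) ∧
    (∀ k, π'.part k = if k = i ∨ k ∈ T then insert i T else (π.part k).erase i)

/-- The weak relation associated with a (primitive) strict relation. -/
def weakOf (sp : N → Finset N → Finset N → Prop) (i : N) (S T : Finset N) : Prop :=
  ¬ sp i T S

/-- Strict part of a weak preference over players. -/
def strictP (p : N → N → N → Prop) (i j k : N) : Prop := p i j k ∧ ¬ p i k j

/-- Player `j` is unacceptable to `i`: `i ≻ᵢ j`. -/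
def unacc (p : N → N → N → Prop) (i j : N) : Prop := strictP p i i j

/-- Player `i` likes `j`: `j ≻ᵢ i`. -/
def likes (p : N → N → N → Prop) (i j : N) : Prop := strictP p i j i

/-- Each player's preference over players is a complete preorder. -/
def CompletePreorder (p : N → N → N → Prop) : Prop :=
  (∀ i j k, p i j k ∨ p i k j) ∧ (∀ i a b c, p i a b → p i b c → p i a c)

/-- The set of `≿ᵢ`-maximal elements of `J`, with `max ∅ = {i}`. -/
def maxSet (p : N → N → N → Prop) (i : N) (J : Finset N) : Set N :=
  if J = ∅ then {i} else {m | m ∈ J ∧ ∀ j ∈ J, p i m j}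

/-- The set of `≿ᵢ`-minimal elements of `J`, with `min ∅ = {i}`. -/
def minSet (p : N → N → N → Prop) (i : N) (J : Finset N) : Set N :=
  if J = ∅ then {i} else {m | m ∈ J ∧ ∀ j ∈ J, p i j m}

/-- W-hedonic (weak) preference over coalitions: compare worst members. -/
def WPref (p : N → N → N → Prop) (i : N) (S T : Finset N) : Prop :=
  ∀ s ∈ minSet p i (S.erase i), ∀ t ∈ minSet p i (T.erase i), p i s t

/-- WW-hedonic (weak) preference over coalitions. -/
def WWPref (p : N → N → N → Prop) (i : N) (S T : Finset N) : Prop :=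
  (∃ j ∈ T.erase i, unacc p i j) ∨ WPref p i S T

/-- BB-hedonic (weak) preference over coalitions. -/
def BBPref (p : N → N → N → Prop) (i : N) (S T : Finset N) : Prop :=
  (∃ j ∈ T.erase i, unacc p i j) ∨
    ((∀ j ∈ S.erase i, ¬ unacc p i j) ∧ (∀ j ∈ T.erase i, ¬ unacc p i j) ∧
      ∀ s ∈ maxSet p i (S.erase i), ∀ t ∈ maxSet p i (T.erase i), p i s t)

/-- B-hedonic strict preference over coalitions: better best member, or
indifferent best members and smaller size. -/
def BStrict (p : N → N → N → Prop) (i : N) (S T : Finset N) : Prop :=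
  (∀ s ∈ maxSet p i (S.erase i), ∀ t ∈ maxSet p i (T.erase i), strictP p i s t) ∨
    ((∀ s ∈ maxSet p i (S.erase i), ∀ t ∈ maxSet p i (T.erase i), p i s t ∧ p i t s) ∧
      S.card < T.card)

/-- B-hedonic weak preference over coalitions. -/
def BWeak (p : N → N → N → Prop) : N → Finset N → Finset N → Prop :=
  weakOf (BStrict p)

end Defs

/-- Players of the SAT reduction game: one player per clause, one player per
literal (a variable together with a sign), and the special players 0 and 1. -/
inductive SatPlayer (k m : ℕ) where
  | clause : Fin k → SatPlayer k m
  | lit : Fin m → Bool → SatPlayer k m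
  | zero : SatPlayer k m
  | one : SatPlayer k m
deriving DecidableEq, Fintype

/-- Utility encoding of the preferences of the reduction game, for a CNF
formula `F` (clause `X` is the set of literals `F X`).  The diagonal value is
each player's acceptability threshold. -/
def satU {k m : ℕ} (F : Fin k → Finset (Fin m × Bool)) :
    SatPlayer k m → SatPlayer k m → ℤ
  | .lit q b, y =>
      match y with
      | .zero => 3
      | .one => 3
      | .lit q' b' => if q' = q then (if b' = b then 1 else 0) else 2
      | .clause _ => 0
  | .clause X, y =>
      match y with
      | .one => 4
      | .lit q b => if (q, b) ∈ F X then 1 else 3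
      | .clause _ => 2
      | .zero => 1
  | .zero, y =>
      match y with
      | .one => 1
      | .clause _ => 1
      | _ => 2
  | .one, y =>
      match y with
      | .zero => 1
      | .clause _ => 1
      | _ => 2

/-- The induced (weak) preference of each player over players. -/
def satP {k m : ℕ} (F : Fin k → Finset (Fin m × Bool)) :
    SatPlayer k m → SatPlayer k m → SatPlayer k m → Prop :=
  fun i j l => satU F i l ≤ satU F i j

open Classical in
/-- The coalition of player 1 together with the literals true under `v`. -/
noncomputable def Tcoal (k m : ℕ) (v : Fin m → Bool) : Finset (SatPlayer k m) :=
  Finset.univ.filter fun x => x = .one ∨ ∃ q b, x = .lit q b ∧ v q = b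

open Classical in
/-- The coalition of player 0 together with the literals false under `v`. -/
noncomputable def Fcoal (k m : ℕ) (v : Fin m → Bool) : Finset (SatPlayer k m) :=
  Finset.univ.filter fun x => x = .zero ∨ ∃ q b, x = .lit q b ∧ v q ≠ b

open Classical in
/-- The coalition of all clause players. -/
noncomputable def Ccoal (k m : ℕ) : Finset (SatPlayer k m) :=
  Finset.univ.filter fun x => ∃ X, x = .clause X

/-!
Every coalition of `π` is acceptable to all of its members, so no one prefers to be alone, and
every other coalition contains a player the deviator finds unacceptable, which makes any move
strictly worse under BB-preferences: `0` and `1` reject each other and all clauses, a literal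
rejects its negation and all clauses, and a clause rejects `0` and its own literals. The last
point is where satisfiability enters: every clause has a true literal, so the coalition of `1`
contains a literal that clause rejects.
-/

theorem HPartition.notMem_part_of_part_ne {N : Type*} {π : HPartition N} {i j : N}
    (h : π.part j ≠ π.part i) : i ∉ π.part j :=
  fun hi => h (π.eq_of_mem j i hi).symm

section BBPref

variable {N : Type*} [DecidableEq N] {p : N → N → N → Prop} {i : N}

theorem BBPref.of_unacc_mem {S T : Finset N} {j : N} (hjT : j ∈ T) (hji : j ≠ i)
    (hj : unacc p i j) : BBPref p i S T :=
  Or.inl ⟨j, Finset.mem_erase.2 ⟨hji, hjT⟩, hj⟩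

theorem BBPref.singleton_of_forall_pref_self {S : Finset N} (hi : i ∈ S)
    (hS : ∀ j ∈ S, p i j i) : BBPref p i S {i} := by
  have hacc : ∀ j ∈ S.erase i, ¬ unacc p i j :=
    fun j hj hu => hu.2 (hS j (Finset.mem_of_mem_erase hj))
  refine Or.inr ⟨hacc, by simp, fun s hs t ht => ?_⟩
  have ht : t = i := by simpa [maxSet] using ht
  rw [ht]
  by_cases hS' : S.erase i = ∅
  · rw [maxSet, if_pos hS', Set.mem_singleton_iff] at hs
    exact hs ▸ hS i hi
  · rw [maxSet, if_neg hS'] at hs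
    exact hS s (Finset.mem_of_mem_erase hs.1)

variable {π : HPartition N}

theorem indRational_bbPref_of_forall_pref_self (hown : ∀ i, ∀ j ∈ π.part i, p i j i) :
    IndRational (BBPref p) π :=
  fun i => BBPref.singleton_of_forall_pref_self (π.mem_self i) (hown i)

theorem nashStable_bbPref_of_forall_pref_self_of_exists_unacc
    (hown : ∀ i, ∀ j ∈ π.part i, p i j i)
    (hother : ∀ i j, i ∉ π.part j → ∃ l ∈ π.part j, unacc p i l) :
    NashStable (BBPref p) π := by
  rintro i S (rfl | ⟨j, rfl⟩) hne ⟨-, hworse⟩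
  · exact hworse (by simpa using BBPref.singleton_of_forall_pref_self (π.mem_self i) (hown i))
  · have hij := HPartition.notMem_part_of_part_ne hne
    obtain ⟨l, hl, hunacc⟩ := hother i j hij
    exact hworse (.of_unacc_mem (Finset.mem_insert_of_mem hl) (ne_of_mem_of_not_mem hl hij)
      hunacc)

end BBPref

def HPartition.ofFibres {N α : Type*} [Fintype N] [DecidableEq α] (f : N → α) :
    HPartition N where
  part i := Finset.univ.filter fun j => f j = f i
  mem_self i := by simp
  eq_of_mem i j h := by
    simp only [Finset.mem_filter, Finset.mem_univ, true_and] at h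
    simp [h]

theorem HPartition.mem_ofFibres_part {N α : Type*} [Fintype N] [DecidableEq α] {f : N → α}
    {i j : N} : j ∈ (HPartition.ofFibres f).part i ↔ f j = f i := by
  simp [HPartition.ofFibres]

namespace SatPlayer

variable {k m : ℕ}

def label (v : Fin m → Bool) : SatPlayer k m → Option Bool
  | clause _ => none
  | lit q b => some (decide (v q = b))
  | zero => some false
  | one => some true

theorem mem_Tcoal_iff {v : Fin m → Bool} {x : SatPlayer k m} :
    x ∈ Tcoal k m v ↔ x.label v = some true := by
  cases x <;> simp [Tcoal, label, eq_comm]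

theorem mem_Fcoal_iff {v : Fin m → Bool} {x : SatPlayer k m} :
    x ∈ Fcoal k m v ↔ x.label v = some false := by
  cases x with
  | lit q b => cases b <;> cases hq : v q <;> simp [Fcoal, label, hq]
  | _ => simp [Fcoal, label]

theorem mem_Ccoal_iff {v : Fin m → Bool} {x : SatPlayer k m} :
    x ∈ Ccoal k m ↔ x.label v = none := by
  cases x <;> simp [Ccoal, label]

theorem part_ofFibres_label (v : Fin m → Bool) (x : SatPlayer k m) :
    (HPartition.ofFibres (label v)).part x =
      if x ∈ Tcoal k m v then Tcoal k m v
      else if x ∈ Fcoal k m v then Fcoal k m v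
      else Ccoal k m := by
  ext y
  rw [HPartition.mem_ofFibres_part]
  rcases hx : x.label v with _ | _ | _ <;>
    simp [mem_Tcoal_iff, mem_Fcoal_iff, mem_Ccoal_iff (v := v), hx]

end SatPlayer

section SatGame

variable {k m : ℕ} (F : Fin k → Finset (Fin m × Bool))

theorem unacc_satP_iff {i j : SatPlayer k m} :
    unacc (satP F) i j ↔ satU F i j < satU F i i := by
  simp only [unacc, strictP, satP]
  omega

theorem satP_self_of_label_eq {v : Fin m → Bool} {i j : SatPlayer k m}
    (h : j.label v = i.label v) : satP F i j i := by
  cases i with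
  | lit q b =>
    cases j with
    | lit q' b' =>
      have hb : v q' = b' ↔ v q = b := by simpa [SatPlayer.label] using h
      simp only [satP, satU, ↓reduceIte]
      split_ifs with hq hbb <;> try omega
      subst hq
      exact absurd (by cases v q' <;> cases b <;> cases b' <;> simp_all) hbb
    | _ => simp_all [satP, satU, SatPlayer.label]
  | _ => cases j <;> simp_all [satP, satU, SatPlayer.label]

theorem exists_unacc_of_label_ne {v : Fin m → Bool} (hv : ∀ X : Fin k, ∃ ℓ ∈ F X, v ℓ.1 = ℓ.2)
    {i j : SatPlayer k m} (h : i.label v ≠ j.label v) :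
    ∃ l : SatPlayer k m, l.label v = j.label v ∧ unacc (satP F) i l := by
  simp only [unacc_satP_iff]
  rcases hj : j.label v with _ | _ | _
  · refine ⟨j, hj, ?_⟩
    cases i <;> cases j <;> simp_all [SatPlayer.label, satU]
  · cases i with
    | lit q b => exact ⟨.lit q !b, by simp_all [SatPlayer.label], by simp [satU]⟩
    | _ => exact ⟨.zero, rfl, by simp_all [SatPlayer.label, satU]⟩
  · cases i with
    | clause X =>
      obtain ⟨ℓ, hℓF, hℓv⟩ := hv X
      exact ⟨.lit ℓ.1 ℓ.2, by simp [SatPlayer.label, hℓv], by simp [satU, hℓF]⟩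
    | lit q b =>
      exact ⟨.lit q (v q), by simp [SatPlayer.label], by simp_all [SatPlayer.label, satU]⟩
    | _ => exact ⟨.one, rfl, by simp_all [SatPlayer.label, satU]⟩

end SatGame

/-- if the valuation `v` satisfies the CNF formula `F`, then the
partition `{ {1} ∪ true literals, {0} ∪ false literals, all clauses }` is Nash
stable and individually rational in the constructed BB-hedonic game. -/
theorem sat_reduction_ns {k m : ℕ} (F : Fin k → Finset (Fin m × Bool))
    (v : Fin m → Bool) (hv : ∀ X : Fin k, ∃ ℓ ∈ F X, v ℓ.1 = ℓ.2) :
    ∃ π : HPartition (SatPlayer k m),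
      (∀ x, π.part x =
        if x ∈ Tcoal k m v then Tcoal k m v
        else if x ∈ Fcoal k m v then Fcoal k m v
        else Ccoal k m) ∧
      NashStable (BBPref (satP F)) π ∧ IndRational (BBPref (satP F)) π := by
  have hown : ∀ i, ∀ j ∈ (HPartition.ofFibres (SatPlayer.label v)).part i, satP F i j i :=
    fun i j hj => satP_self_of_label_eq F (HPartition.mem_ofFibres_part.1 hj)
  refine ⟨HPartition.ofFibres (SatPlayer.label v), SatPlayer.part_ofFibres_label v,
    nashStable_bbPref_of_forall_pref_self_of_exists_unacc hown fun i j hij => ?_,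
    indRational_bbPref_of_forall_pref_self hown⟩
  obtain ⟨l, hl, hunacc⟩ :=
    exists_unacc_of_label_ne F hv (mt HPartition.mem_ofFibres_part.2 hij)
  exact ⟨l, HPartition.mem_ofFibres_part.2 hl, hunacc⟩
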